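/- Let q > 0 and r ≥ 0 be real numbers, and let f : ℝ → ℝ be a twice continuously differentiable function with f(t) > 0 for all t in an open interval I. Define H(t) = (q+1)⁻¹ · [ −coth(f(t))^r · f''(t) · (1+f'(t)²)^(−(r+3)/2) + q · coth(f(t))^(r+1) · (1+f'(t)²)^(−(r+1)/2) ]. Then for all t ∈ I the identity (q+1) · f'(t) · (1+f'(t)²)^(r/2) · sinh(f(t))^(q+r) / cosh(f(t))^r · H(t) = d/dt [ sinh(f(t))^q · (1+f'(t)²)^(−1/2) ] holds. -/

import Mathlib

/-- The identity relating equations (1) and (2) of the paper: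
for a positive C² function `f` on an open interval `I`, with
`H = (q+1)⁻¹ [ -coth(f)^r f'' (1+f'²)^{-(r+3)/2} + q coth(f)^{r+1} (1+f'²)^{-(r+1)/2} ]`,
one has
`(q+1) f' (1+f'²)^{r/2} sinh(f)^{q+r} / cosh(f)^r · H = d/dt [ sinh(f)^q (1+f'²)^{-1/2} ]`. -/
lemma alg (q r s c p u B : ℝ) (hs : 0 < s) (hc : 0 < c) (hu : 0 < u) (hq : 0 < q) :
    (q + 1) * p * u ^ (r / 2) * s ^ (q + r) / c ^ r *
      ((q + 1)⁻¹ * (-(c / s) ^ r * B * u ^ (-(r + 3) / 2) +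
        q * (c / s) ^ (r + 1) * u ^ (-(r + 1) / 2))) =
    c * p * q * s ^ (q - 1) * u ^ (-(1:ℝ) / 2) +
      s ^ q * (2 * p * B * (-(1:ℝ) / 2) * u ^ (-(1:ℝ) / 2 - 1)) := by
  have hq1 : q + 1 ≠ 0 := by positivity
  have e1 : -(r + 3) / 2 = -(r / 2) + (-(1:ℝ) / 2 - 1) := by ring
  have e2 : -(r + 1) / 2 = -(r / 2) + (-(1:ℝ) / 2) := by ring
  rw [Real.div_rpow hc.le hs.le, Real.div_rpow hc.le hs.le, e1, e2,
    Real.rpow_add hu, Real.rpow_add hu, Real.rpow_neg hu.le,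
    Real.rpow_add hs, Real.rpow_add_one hc.ne', Real.rpow_add_one hs.ne',
    Real.rpow_sub hs, Real.rpow_one, Real.rpow_sub hu, Real.rpow_one]
  have h1 : s ^ r ≠ 0 := by positivity
  have h2 : c ^ r ≠ 0 := by positivity
  have h3 : u ^ (r / 2) ≠ 0 := by positivity
  field_simp
  ring

theorem stmt_0 (q r : ℝ) (hq : 0 < q) (hr : 0 ≤ r)
    (I : Set ℝ) (hIopen : IsOpen I) (hIconv : Convex ℝ I)
    (f : ℝ → ℝ) (hf : ContDiffOn ℝ 2 f I)
    (hfpos : ∀ t ∈ I, 0 < f t)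
    (H : ℝ → ℝ)
    (hH : ∀ t ∈ I, H t =
      (q + 1)⁻¹ *
        (-(Real.cosh (f t) / Real.sinh (f t)) ^ r * deriv (deriv f) t *
            (1 + deriv f t ^ 2) ^ (-(r + 3) / 2) +
          q * (Real.cosh (f t) / Real.sinh (f t)) ^ (r + 1) *
            (1 + deriv f t ^ 2) ^ (-(r + 1) / 2))) :
    ∀ t ∈ I,
      (q + 1) * deriv f t * (1 + deriv f t ^ 2) ^ (r / 2) *
          Real.sinh (f t) ^ (q + r) / Real.cosh (f t) ^ r * H t =
        deriv (fun s => Real.sinh (f s) ^ q * (1 + deriv f s ^ 2) ^ (-(1 : ℝ) / 2)) t := by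
  intro t ht
  have hdf : ContDiffOn ℝ 1 (deriv f) I := hf.deriv_of_isOpen hIopen (by norm_num)
  have hft : HasDerivAt f (deriv f t) t :=
    (((hf t ht).contDiffAt (hIopen.mem_nhds ht)).differentiableAt (by norm_num)).hasDerivAt
  have hdft : HasDerivAt (deriv f) (deriv (deriv f) t) t :=
    (((hdf t ht).contDiffAt (hIopen.mem_nhds ht)).differentiableAt (by norm_num)).hasDerivAt
  have hs : 0 < Real.sinh (f t) := Real.sinh_pos_iff.2 (hfpos t ht)
  have hc : 0 < Real.cosh (f t) := Real.cosh_pos (f t)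
  have hu : 0 < 1 + deriv f t ^ 2 := by positivity
  have h1 : HasDerivAt (fun s => Real.sinh (f s) ^ q)
      (Real.cosh (f t) * deriv f t * q * Real.sinh (f t) ^ (q - 1)) t := by
    have := ((Real.hasDerivAt_sinh (f t)).comp t hft).rpow_const (p := q) (Or.inl hs.ne')
    simpa [Function.comp] using this
  have hbase : HasDerivAt (fun s => 1 + deriv f s ^ 2)
      (2 * deriv f t * deriv (deriv f) t) t := by
    have := (hdft.pow 2).const_add 1
    simpa [mul_comm, mul_assoc] using this
  have h2 : HasDerivAt (fun s => (1 + deriv f s ^ 2) ^ (-(1:ℝ) / 2))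
      (2 * deriv f t * deriv (deriv f) t * (-(1:ℝ) / 2) *
        (1 + deriv f t ^ 2) ^ (-(1:ℝ) / 2 - 1)) t :=
    hbase.rpow_const (p := -(1:ℝ)/2) (Or.inl hu.ne')
  rw [(h1.fun_mul h2).deriv, hH t ht]
  exact alg q r _ _ _ _ _ hs hc hu hq
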